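/- For x ∈ ℝᵐ with all coordinates nonzero, i ≠ j, and n := ‖x‖_p, the off-diagonal partial derivative of HNTanh is ∂yᵢ/∂xⱼ = xᵢ |xⱼ|^{p−1} sign(xⱼ) · ((n(1 − tanh²(n)) − tanh(n))/n²) · n^{1−p}. -/

import Mathlib

/-!
For `i ≠ j` the coordinate `yᵢ` is `xᵢ · φ(n)` with `φ(n) = tanh n / n`, so its `xⱼ`-derivative is
`xᵢ φ'(n) ∂n/∂xⱼ`. Differentiating `n = (Σₗ |xₗ|^p)^{1/p}` through the single term `|xⱼ|^p` gives
`∂n/∂xⱼ = |xⱼ|^{p-1} sign(xⱼ) n^{1-p}`, using `(Σₗ |xₗ|^p)^{1/p - 1} = n^{1-p}`.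
-/

/-- The `p`-norm `‖x‖_p = (Σₗ |xₗ|^p)^(1/p)` on `ℝᵐ`. -/
noncomputable def pnorm (p : ℝ) {m : ℕ} (x : Fin m → ℝ) : ℝ :=
  (∑ l, |x l| ^ p) ^ (1 / p)

open Function Real

namespace Real

theorem hasDerivAt_tanh (y : ℝ) : HasDerivAt tanh (1 - tanh y ^ 2) y := by
  have h := (hasDerivAt_sinh y).div (hasDerivAt_cosh y) (cosh_pos y).ne'
  rw [show sinh / cosh = tanh from funext fun z => (tanh_eq_sinh_div_cosh z).symm] at h
  refine h.congr_deriv ?_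
  have hc := (cosh_pos y).ne'
  rw [tanh_eq_sinh_div_cosh]
  field_simp

theorem hasDerivAt_tanh_div_self {n : ℝ} (hn : n ≠ 0) :
    HasDerivAt (fun y => tanh y / y) ((n * (1 - tanh n ^ 2) - tanh n) / n ^ 2) n := by
  refine ((hasDerivAt_tanh n).div (hasDerivAt_id n) hn).congr_deriv ?_
  simp only [id]
  ring

theorem hasDerivAt_abs_of_ne_zero {a : ℝ} (ha : a ≠ 0) : HasDerivAt (|·|) (sign a) a := by
  rcases ha.lt_or_gt with h | h
  · rw [sign_of_neg h]; exact hasDerivAt_abs_neg h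
  · rw [sign_of_pos h]; exact hasDerivAt_abs_pos h

theorem hasDerivAt_abs_rpow_of_ne_zero (p : ℝ) {a : ℝ} (ha : a ≠ 0) :
    HasDerivAt (fun t => |t| ^ p) (p * |a| ^ (p - 1) * sign a) a := by
  refine ((hasDerivAt_abs_of_ne_zero ha).rpow_const (Or.inl (abs_ne_zero.mpr ha))).congr_deriv ?_
  ring

end Real

section PNorm

variable {m : ℕ} {p : ℝ}

theorem sum_abs_rpow_update (x : Fin m → ℝ) (j : Fin m) (t : ℝ) :
    ∑ l, |update x j t l| ^ p = |t| ^ p + ∑ l ∈ Finset.univ \ {j}, |x l| ^ p := by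
  rw [← Finset.sum_update_of_mem (Finset.mem_univ j)]
  refine Finset.sum_congr rfl fun l _ => ?_
  rcases eq_or_ne l j with rfl | hl <;> simp [*]

theorem sum_abs_rpow_pos {x : Fin m → ℝ} {j : Fin m} (hj : x j ≠ 0) :
    0 < ∑ l, |x l| ^ p :=
  (rpow_pos_of_pos (abs_pos.mpr hj) p).trans_le
    (Finset.single_le_sum (f := fun l => |x l| ^ p) (fun l _ => by positivity)
      (Finset.mem_univ j))

theorem pnorm_pos {x : Fin m → ℝ} {j : Fin m} (hj : x j ≠ 0) : 0 < pnorm p x :=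
  rpow_pos_of_pos (sum_abs_rpow_pos hj) _

theorem pnorm_rpow_one_sub (hp : p ≠ 0) (x : Fin m → ℝ) :
    pnorm p x ^ (1 - p) = (∑ l, |x l| ^ p) ^ (1 / p - 1) := by
  rw [pnorm, ← rpow_mul (Finset.sum_nonneg fun l _ => by positivity)]
  congr 1
  field_simp

theorem hasDerivAt_pnorm_update (hp : p ≠ 0) {x : Fin m → ℝ} {j : Fin m} (hj : x j ≠ 0) :
    HasDerivAt (fun t => pnorm p (update x j t))
      (|x j| ^ (p - 1) * sign (x j) * pnorm p x ^ (1 - p)) (x j) := by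
  have hsum : HasDerivAt (fun t => ∑ l, |update x j t l| ^ p)
      (p * |x j| ^ (p - 1) * sign (x j)) (x j) := by
    simp only [sum_abs_rpow_update]
    exact (hasDerivAt_abs_rpow_of_ne_zero p hj).add_const _
  have hroot := hsum.rpow_const (p := 1 / p) (Or.inl (by
    rw [update_eq_self]; exact (sum_abs_rpow_pos hj).ne'))
  rw [update_eq_self, ← pnorm_rpow_one_sub hp] at hroot
  refine hroot.congr_deriv ?_
  field_simp

end PNorm

/-- Off-diagonal partial derivative of HNTanh: at a point `x` with all coordinates
nonzero, for `i ≠ j`, writing `n = ‖x‖_p`,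
`∂yᵢ/∂xⱼ = xᵢ |xⱼ|^{p−1} sign(xⱼ) ((n(1 − tanh²n) − tanh n)/n²) n^{1−p}`. -/
theorem hntanh_offdiag_partial (m : ℕ) (p : ℝ) (hp : 1 < p)
    (x : Fin m → ℝ) (hx : ∀ k, x k ≠ 0) (i j : Fin m) (hij : i ≠ j) :
    HasDerivAt
      (fun t : ℝ =>
        (Function.update x j t i / pnorm p (Function.update x j t)) *
          Real.tanh (pnorm p (Function.update x j t)))
      (x i * |x j| ^ (p - 1) * Real.sign (x j) *
        ((pnorm p x * (1 - Real.tanh (pnorm p x) ^ 2) - Real.tanh (pnorm p x)) /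
          (pnorm p x) ^ 2) * (pnorm p x) ^ (1 - p))
      (x j) := by
  have hN := hasDerivAt_pnorm_update (zero_lt_one.trans hp).ne' (hx j)
  have hφ := hasDerivAt_tanh_div_self (pnorm_pos (p := p) (hx j)).ne'
  have hy := (hφ.comp_of_eq (x j) hN (by rw [update_eq_self])).const_mul (x i)
  refine (hy.congr_deriv (by ring)).congr_of_eventuallyEq (.of_forall fun t => ?_)
  simp only [comp_apply, update_of_ne hij]
  ring
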